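/- Let u : ℝ → ℝ be a Lipschitz function that is square-integrable on ℝ, and let a < b be real numbers with u(x) = 0 for every x ∈ [a,b]. Denote by u′ the almost-everywhere defined derivative of u, and define N(x) = −∫_ℝ K(x−y)·(u(y)² + u′(y)²/2) dy. If N is not strictly decreasing on [a,b], i.e. there exist a ≤ x₁ < x₂ ≤ b with N(x₂) ≥ N(x₁), then u(x) = 0 for every x ∈ ℝ. -/

import Mathlib

open MeasureTheory Real
open scoped ENNReal NNReal

noncomputable def bbmK (x : ℝ) : ℝ := -Real.sign x * Real.exp (-|x|) / 2

/-!
With `F = u² + (u')²/2 ≥ 0`, the hypothesis reads `∫ (K(x₂ - y) - K(x₁ - y)) F(y) dy ≤ 0`.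
Since `K` is strictly increasing on each half-line, the weight `K(x₂ - y) - K(x₁ - y)` is positive
for `y ∉ [x₁, x₂]`, while `F` vanishes on `(x₁, x₂) ⊆ [a, b]`. So the integrand is a.e. nonnegative
with nonpositive integral, hence vanishes a.e.; then `F`, and with it `u`, vanishes a.e., and
`u ≡ 0` by continuity.
-/

lemma Real.sign_monotone : Monotone Real.sign := by
  intro x y hxy
  unfold Real.sign
  split_ifs <;> linarith

lemma measurable_bbmK : Measurable bbmK := by
  unfold bbmK
  have := Real.sign_monotone.measurable
  fun_prop

lemma bbmK_of_pos {t : ℝ} (ht : 0 < t) : bbmK t = -exp (-t) / 2 := by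
  rw [bbmK, Real.sign_of_pos ht, abs_of_pos ht]; ring

lemma bbmK_of_neg {t : ℝ} (ht : t < 0) : bbmK t = exp t / 2 := by
  rw [bbmK, Real.sign_of_neg ht, abs_of_neg ht, neg_neg t]; ring

lemma bbmK_lt_bbmK {s t : ℝ} (hst : s < t) (h : 0 < s ∨ t < 0) : bbmK s < bbmK t := by
  rcases h with hs | ht
  · rw [bbmK_of_pos hs, bbmK_of_pos (hs.trans hst)]
    gcongr
  · rw [bbmK_of_neg (hst.trans ht), bbmK_of_neg ht]
    gcongr

lemma abs_bbmK_le (t : ℝ) : |bbmK t| ≤ exp (-|t|) / 2 := by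
  have hsign : |Real.sign t| ≤ 1 := by
    rcases Real.sign_apply_eq t with h | h | h <;> norm_num [h]
  rw [bbmK, abs_div, abs_mul, abs_neg, abs_of_pos (exp_pos _), abs_two]
  gcongr
  exact mul_le_of_le_one_left (exp_pos _).le hsign

lemma abs_bbmK_le_half (t : ℝ) : |bbmK t| ≤ 1 / 2 :=
  (abs_bbmK_le t).trans (by gcongr; exact exp_le_one_iff.2 (neg_nonpos.2 (abs_nonneg t)))

lemma integrable_exp_neg_abs : Integrable fun x : ℝ => exp (-|x|) := by
  have hpos : IntegrableOn (fun x : ℝ => exp (-|x|)) (Set.Ioi 0) :=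
    (exp_neg_integrableOn_Ioi 0 one_pos).congr_fun
      (fun x hx => by simp [abs_of_pos (Set.mem_Ioi.1 hx)]) measurableSet_Ioi
  have hneg : IntegrableOn (fun x : ℝ => exp (-|x|)) (Set.Iic 0) :=
    (integrableOn_exp_Iic 0).congr_fun
      (fun x hx => by rw [abs_of_nonpos (Set.mem_Iic.1 hx), neg_neg]) measurableSet_Iic
  simpa [Set.Iic_union_Ioi] using hneg.union hpos

lemma integrable_bbmK : Integrable bbmK :=
  (integrable_exp_neg_abs.div_const 2).mono' measurable_bbmK.aestronglyMeasurable
    (ae_of_all _ abs_bbmK_le)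

lemma Integrable.bbmK_sub_mul {f : ℝ → ℝ} (hf : Integrable f) (x : ℝ) :
    Integrable fun y => bbmK (x - y) * f y :=
  hf.bdd_mul (measurable_bbmK.comp (measurable_const.sub measurable_id)).aestronglyMeasurable
    (ae_of_all _ fun y => abs_bbmK_le_half (x - y))

lemma integrable_bbmK_sub_mul_of_abs_le {g : ℝ → ℝ} {C : ℝ} (hg : AEStronglyMeasurable g)
    (hC : ∀ y, |g y| ≤ C) (x : ℝ) : Integrable fun y => bbmK (x - y) * g y :=
  (integrable_bbmK.comp_sub_left x).mul_bdd hg (ae_of_all _ hC)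

lemma ae_eq_zero_of_integral_bbmK_sub_mul_le {F : ℝ → ℝ} {x₁ x₂ : ℝ} (hx : x₁ < x₂)
    (hF : ∀ y, 0 ≤ F y) (hF_zero : ∀ y ∈ Set.Ioo x₁ x₂, F y = 0)
    (h₁ : Integrable fun y => bbmK (x₁ - y) * F y)
    (h₂ : Integrable fun y => bbmK (x₂ - y) * F y)
    (hle : ∫ y, bbmK (x₂ - y) * F y ≤ ∫ y, bbmK (x₁ - y) * F y) :
    F =ᵐ[volume] 0 := by
  set w : ℝ → ℝ := fun y => (bbmK (x₂ - y) - bbmK (x₁ - y)) * F y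
  have hK : ∀ y, y < x₁ ∨ x₂ < y → bbmK (x₁ - y) < bbmK (x₂ - y) := fun y hy =>
    bbmK_lt_bbmK (by linarith) (hy.imp sub_pos.2 sub_neg.2)
  have h_off : ∀ᵐ y, y ≠ x₁ ∧ y ≠ x₂ := by
    filter_upwards [(Set.toFinite {x₁, x₂}).countable.ae_notMem volume] with y hy
    simpa [not_or] using hy
  have h_split : ∀ y, y ≠ x₁ ∧ y ≠ x₂ → y ∈ Set.Ioo x₁ x₂ ∨ y < x₁ ∨ x₂ < y := by
    rintro y ⟨h₁, h₂⟩
    simp only [Set.mem_Ioo]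
    grind
  have hw_nonneg : 0 ≤ᵐ[volume] w := by
    filter_upwards [h_off] with y hy
    rcases h_split y hy with hy | hy
    · simp [w, hF_zero y hy]
    · exact mul_nonneg (sub_nonneg.2 (hK y hy).le) (hF y)
  have hw_int : Integrable w := by
    simpa only [w, sub_mul] using h₂.sub' h₁
  have hw_zero : w =ᵐ[volume] 0 := by
    refine (integral_eq_zero_iff_of_nonneg_ae hw_nonneg hw_int).1 (le_antisymm ?_ ?_)
    · simp only [w, sub_mul]
      rw [integral_sub h₂ h₁]
      linarith
    · exact integral_nonneg_of_ae hw_nonneg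
  filter_upwards [hw_zero, h_off] with y hwy hy
  rcases h_split y hy with hy | hy
  · exact hF_zero y hy
  · exact (mul_eq_zero.1 hwy).resolve_left (sub_ne_zero.2 (hK y hy).ne')

lemma LipschitzWith.integrable_bbmK_sub_mul_energy {u : ℝ → ℝ} {L : ℝ≥0}
    (hLip : LipschitzWith L u) (hL2 : MemLp u 2 volume) (x : ℝ) :
    Integrable fun y => bbmK (x - y) * (u y ^ 2 + deriv u y ^ 2 / 2) := by
  simp only [mul_add]
  refine (Integrable.bbmK_sub_mul hL2.integrable_sq x).add
    (integrable_bbmK_sub_mul_of_abs_le (C := (L : ℝ) ^ 2 / 2)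
      ((measurable_deriv u).pow_const 2 |>.div_const 2).aestronglyMeasurable (fun y => ?_) x)
  rw [abs_of_nonneg (by positivity), ← sq_abs, ← Real.norm_eq_abs]
  gcongr
  exact norm_deriv_le_of_lipschitz hLip

theorem camassa_holm_unique_continuation_general (u : ℝ → ℝ) (L : ℝ≥0)
    (hLip : LipschitzWith L u) (hL2 : MemLp u 2 (volume : Measure ℝ))
    (a b : ℝ) (hz : ∀ x ∈ Set.Icc a b, u x = 0)
    (x₁ x₂ : ℝ) (hx₁ : a ≤ x₁) (hx₁₂ : x₁ < x₂) (hx₂ : x₂ ≤ b)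
    (hN : (-∫ y : ℝ, bbmK (x₁ - y) * (u y ^ 2 + (deriv u y) ^ 2 / 2)) ≤
      -∫ y : ℝ, bbmK (x₂ - y) * (u y ^ 2 + (deriv u y) ^ 2 / 2)) :
    ∀ x : ℝ, u x = 0 := by
  set F : ℝ → ℝ := fun y => u y ^ 2 + (deriv u y) ^ 2 / 2
  have hF_int := hLip.integrable_bbmK_sub_mul_energy hL2
  have hF_zero : ∀ y ∈ Set.Ioo x₁ x₂, F y = 0 := by
    intro y hy
    have hu : u =ᶠ[nhds y] 0 := Filter.eventually_of_mem (Ioo_mem_nhds hy.1 hy.2)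
      fun z hz' => hz z ⟨hx₁.trans hz'.1.le, hz'.2.le.trans hx₂⟩
    simp [F, hu.eq_of_nhds, hu.deriv_eq]
  have hF_ae := ae_eq_zero_of_integral_bbmK_sub_mul_le hx₁₂ (fun y => by positivity) hF_zero
    (hF_int x₁) (hF_int x₂) (neg_le_neg_iff.1 hN)
  have hu_ae : u =ᵐ[volume] 0 := by
    filter_upwards [hF_ae] with y hy
    exact pow_eq_zero_iff two_ne_zero |>.1
      ((add_eq_zero_iff_of_nonneg (sq_nonneg _) (by positivity)).1 hy).1
  exact congrFun ((hLip.continuous.ae_eq_iff_eq volume continuous_const).1 hu_ae)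

/-- Time-slice unique continuation for the Camassa–Holm equation: let `u` be Lipschitz and
square-integrable, vanishing on `[a,b]`, and set
`N(x) = -∫ K(x-y)(u² + (u')²/2) dy` (which equals `∂ₜu(x,t₀)` on the slice). If `N` is not
strictly decreasing on `[a,b]`, then `u ≡ 0`. -/
theorem camassa_holm_unique_continuation (u : ℝ → ℝ) (L : ℝ≥0)
    (hLip : LipschitzWith L u) (hL2 : MemLp u 2 (volume : Measure ℝ))
    (a b : ℝ) (hab : a < b) (hz : ∀ x ∈ Set.Icc a b, u x = 0)
    (x₁ x₂ : ℝ) (hx₁ : a ≤ x₁) (hx₁₂ : x₁ < x₂) (hx₂ : x₂ ≤ b)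
    (hN : (-∫ y : ℝ, bbmK (x₁ - y) * (u y ^ 2 + (deriv u y) ^ 2 / 2)) ≤
      -∫ y : ℝ, bbmK (x₂ - y) * (u y ^ 2 + (deriv u y) ^ 2 / 2)) :
    ∀ x : ℝ, u x = 0 :=
  camassa_holm_unique_continuation_general u L hLip hL2 a b hz x₁ x₂ hx₁ hx₁₂ hx₂ hN
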